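/- Let ψ be a species tree topology on X with |X| = n ≥ 2 and let T be a gene tree on X that does not have the same set of clades as ψ. Then the image Φ_{ψ,T}(H_{ψ,T}) is a proper subset of Y_ψ, while Φ_{ψ,T_M}(H_{ψ,T_M}) = Y_ψ; in particular |Φ_{ψ,T}(H_{ψ,T})| < |Φ_{ψ,T_M}(H_{ψ,T_M})|, i.e., strictly fewer population histories are compatible with T than with the matching gene tree T_M. -/

import Mathlib

/-!
Rooted binary trees with leaves labeled by elements of a finite label set.
Each node of a tree is identified with the subtree rooted at it; since leaf
labels are required to be distinct, this identification is faithful.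
-/

inductive RBT (α : Type) where
  | leaf (x : α)
  | node (l r : RBT α)
deriving DecidableEq

namespace RBT

variable {α : Type} [DecidableEq α]

/-- The list of leaf labels, left to right. -/
def leafList : RBT α → List α
  | leaf x => [x]
  | node l r => l.leafList ++ r.leafList

/-- The clade of a node: the set of labels of leaves descended from or equal to it. -/
def clade (t : RBT α) : Finset α := t.leafList.toFinset

/-- `t` is a rooted binary tree on the label set `X`: its leaf labels are
distinct and form exactly the set `X`. -/
def IsTreeOn (t : RBT α) (X : Finset α) : Prop :=
  t.leafList.Nodup ∧ t.clade = X

/-- All nodes of a tree, each identified with the subtree rooted at it. -/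
def subtrees : RBT α → Finset (RBT α)
  | leaf x => {leaf x}
  | node l r => insert (node l r) (subtrees l ∪ subtrees r)

/-- `Anc i j` means node `i` is ancestral to or equal to node `j`, i.e. `i ⪰ j`. -/
def Anc (i j : RBT α) : Prop := j ∈ i.subtrees

instance (i j : RBT α) : Decidable (Anc i j) :=
  inferInstanceAs (Decidable (j ∈ i.subtrees))

/-- Whether a node is internal (a non-leaf). -/
def isInternal : RBT α → Bool
  | leaf _ => false
  | node _ _ => true

/-- The internal nodes of a tree. -/
def internals (t : RBT α) : Finset (RBT α) :=
  t.subtrees.filter fun s => s.isInternal = true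

/-- A coalescent history for a gene tree `T` relative to a species tree
topology `ψ`: a map `h : I_T → I_ψ` such that the clade of `j` is contained in
the clade of `h j` for every internal node `j` of `T`, and `h i ⪰ h j` in `ψ`
whenever `i ⪰ j` in `T`. -/
def IsCoalHistory (ψ T : RBT α) (h : ↥T.internals → ↥ψ.internals) : Prop :=
  (∀ j : ↥T.internals, (j : RBT α).clade ⊆ ((h j : RBT α)).clade) ∧
  ∀ i j : ↥T.internals, Anc (i : RBT α) (j : RBT α) →
    Anc (h i : RBT α) ((h j : RBT α))

/-- The set `H_{ψ,T}` of coalescent histories for `T` relative to `ψ`. -/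
def coalHistories (ψ T : RBT α) : Set (↥T.internals → ↥ψ.internals) :=
  {h | IsCoalHistory ψ T h}

/-- The map `Φ_{ψ,T}`: from a coalescent history, record only the number of
coalescent events `|h⁻¹(i)|` occurring at each internal node `i` of `ψ`. -/
def Phi (ψ T : RBT α) (h : ↥T.internals → ↥ψ.internals) : ↥ψ.internals → ℕ :=
  fun i => (Finset.univ.filter fun j : ↥T.internals => h j = i).card

/-- A population history for `ψ`, where `n` is the number of taxa: a map
`y : I_ψ → ℕ` with total sum `n - 1` such that, for every internal node `i`,
the sum of `y` over internal nodes `j` with `i ⪰ j` is at most `ℓ_i - 1`. -/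
def IsPopHistory (ψ : RBT α) (n : ℕ) (y : ↥ψ.internals → ℕ) : Prop :=
  (∑ i : ↥ψ.internals, y i = n - 1) ∧
  ∀ i : ↥ψ.internals,
    (∑ j ∈ Finset.univ.filter
        (fun j : ↥ψ.internals => Anc (i : RBT α) (j : RBT α)), y j)
      ≤ (i : RBT α).clade.card - 1

/-- The set `Y_ψ` of population histories for `ψ` on `n` taxa. -/
def popHistories (ψ : RBT α) (n : ℕ) : Set (↥ψ.internals → ℕ) :=
  {y | IsPopHistory ψ n y}

/-- A caterpillar: a rooted binary tree whose internal nodes are totally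
ordered by the ancestry relation. -/
def IsCaterpillar (T : RBT α) : Prop :=
  ∀ i ∈ T.internals, ∀ j ∈ T.internals, Anc i j ∨ Anc j i

/-- The set of clades of a tree. -/
def cladeSet (t : RBT α) : Set (Finset α) :=
  {s | ∃ v ∈ t.subtrees, v.clade = s}

end RBT
namespace RBT

variable {α : Type} [DecidableEq α]
set_option linter.unusedSectionVars false

theorem leafList_ne_nil (t : RBT α) : t.leafList ≠ [] := by
  induction t with
  | leaf x => simp [leafList]
  | node l r ihl ihr => simp only [leafList, ne_eq, List.append_eq_nil_iff]; tauto

theorem length_leafList_pos (t : RBT α) : 0 < t.leafList.length :=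
  List.length_pos_iff.mpr (leafList_ne_nil t)

theorem self_mem_subtrees (t : RBT α) : t ∈ t.subtrees := by
  cases t with
  | leaf x => simp [subtrees]
  | node l r => simp [subtrees]

theorem infix_of_mem_subtrees {s t : RBT α} (h : s ∈ t.subtrees) :
    s.leafList <:+: t.leafList := by
  induction t with
  | leaf x =>
    simp [subtrees] at h; subst h; exact List.infix_refl _
  | node l r ihl ihr =>
    simp only [subtrees, Finset.mem_insert, Finset.mem_union] at h
    rcases h with h | h | h
    · subst h; exact List.infix_refl _
    · exact (ihl h).trans ((List.prefix_append l.leafList r.leafList).isInfix)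
    · exact (ihr h).trans ((List.suffix_append l.leafList r.leafList).isInfix)

theorem mem_subtrees_trans {u s t : RBT α} (h1 : s ∈ t.subtrees) (h2 : u ∈ s.subtrees) :
    u ∈ t.subtrees := by
  induction t with
  | leaf x => simp [subtrees] at h1; subst h1; exact h2
  | node l r ihl ihr =>
    simp only [subtrees, Finset.mem_insert, Finset.mem_union] at h1 ⊢
    rcases h1 with h1 | h1 | h1
    · subst h1
      simpa only [subtrees, Finset.mem_insert, Finset.mem_union] using h2
    · exact Or.inr (Or.inl (ihl h1))
    · exact Or.inr (Or.inr (ihr h1))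

theorem length_le_of_mem_subtrees {s t : RBT α} (h : s ∈ t.subtrees) :
    s.leafList.length ≤ t.leafList.length :=
  (infix_of_mem_subtrees h).length_le

theorem eq_or_length_lt_of_mem_subtrees {s t : RBT α} (h : s ∈ t.subtrees) :
    s = t ∨ s.leafList.length < t.leafList.length := by
  induction t with
  | leaf x => simp [subtrees] at h; left; exact h
  | node l r ihl ihr =>
    simp only [subtrees, Finset.mem_insert, Finset.mem_union] at h
    rcases h with h | h | h
    · left; exact h
    · right
      have h1 := length_le_of_mem_subtrees h
      have h2 := length_leafList_pos r
      simp only [leafList, List.length_append]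
      omega
    · right
      have h1 := length_le_of_mem_subtrees h
      have h2 := length_leafList_pos l
      simp only [leafList, List.length_append]
      omega

theorem mem_subtrees_antisymm {s t : RBT α} (h1 : s ∈ t.subtrees) (h2 : t ∈ s.subtrees) :
    s = t := by
  rcases eq_or_length_lt_of_mem_subtrees h1 with h | h
  · exact h
  · have := length_le_of_mem_subtrees h2
    omega

theorem clade_subset_of_mem_subtrees {s t : RBT α} (h : s ∈ t.subtrees) :
    s.clade ⊆ t.clade := by
  intro x hx
  rw [clade, List.mem_toFinset] at hx ⊢
  exact (infix_of_mem_subtrees h).subset hx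

theorem clade_nonempty (t : RBT α) : t.clade.Nonempty := by
  obtain ⟨x, hx⟩ := List.exists_mem_of_ne_nil _ (leafList_ne_nil t)
  exact ⟨x, by rwa [clade, List.mem_toFinset]⟩

theorem nodup_of_mem_subtrees {s t : RBT α} (hN : t.leafList.Nodup) (h : s ∈ t.subtrees) :
    s.leafList.Nodup :=
  hN.sublist (infix_of_mem_subtrees h).sublist

theorem clade_node (l r : RBT α) : (node l r).clade = l.clade ∪ r.clade := by
  simp [clade, leafList]

theorem nodup_node {l r : RBT α} (hN : (node l r).leafList.Nodup) :
    l.leafList.Nodup ∧ r.leafList.Nodup ∧ l.leafList.Disjoint r.leafList := by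
  rw [leafList, List.nodup_append] at hN
  exact ⟨hN.1, hN.2.1, fun a ha hb => hN.2.2 a ha a hb rfl⟩

theorem clade_disjoint {l r : RBT α} (hN : (node l r).leafList.Nodup) :
    Disjoint l.clade r.clade := by
  obtain ⟨_, _, hd⟩ := nodup_node hN
  rw [Finset.disjoint_left]
  intro a ha hb
  rw [clade, List.mem_toFinset] at ha hb
  exact hd ha hb

theorem not_mem_both_subtrees {l r s : RBT α} (hN : (node l r).leafList.Nodup)
    (h1 : s ∈ l.subtrees) (h2 : s ∈ r.subtrees) : False := by
  obtain ⟨x, hx⟩ := clade_nonempty s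
  have hxl := clade_subset_of_mem_subtrees h1 hx
  have hxr := clade_subset_of_mem_subtrees h2 hx
  have hd := clade_disjoint hN
  rw [Finset.disjoint_left] at hd
  exact hd hxl hxr

theorem node_not_mem_left {l r : RBT α} : (node l r) ∉ l.subtrees := by
  intro h
  have h1 := length_le_of_mem_subtrees h
  have h2 := length_leafList_pos r
  simp only [leafList, List.length_append] at h1
  omega

theorem node_not_mem_right {l r : RBT α} : (node l r) ∉ r.subtrees := by
  intro h
  have h1 := length_le_of_mem_subtrees h
  have h2 := length_leafList_pos l
  simp only [leafList, List.length_append] at h1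
  omega

@[simp] theorem isInternal_leaf (x : α) : (leaf x : RBT α).isInternal = false := rfl

@[simp] theorem isInternal_node (l r : RBT α) : (node l r).isInternal = true := rfl

@[simp] theorem internals_leaf (x : α) : (leaf x : RBT α).internals = ∅ := by
  ext s
  simp only [internals, subtrees, Finset.mem_filter, Finset.mem_singleton, Finset.notMem_empty,
    iff_false, not_and]
  rintro rfl
  simp

theorem internals_node (l r : RBT α) :
    (node l r).internals = insert (node l r) (l.internals ∪ r.internals) := by
  simp [internals, subtrees, Finset.filter_insert, Finset.filter_union]

theorem internals_subset_subtrees (t : RBT α) : t.internals ⊆ t.subtrees :=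
  Finset.filter_subset _ _

theorem mem_internals {s t : RBT α} :
    s ∈ t.internals ↔ s ∈ t.subtrees ∧ s.isInternal = true := Finset.mem_filter

theorem internals_mono {s t : RBT α} (h : s ∈ t.subtrees) : s.internals ⊆ t.internals := by
  intro j hj
  rw [mem_internals] at hj ⊢
  exact ⟨mem_subtrees_trans h hj.1, hj.2⟩

theorem filter_anc {s t : RBT α} (hs : s ∈ t.subtrees) :
    t.internals.filter (fun j => Anc s j) = s.internals := by
  ext j
  rw [Finset.mem_filter, mem_internals, mem_internals, Anc]
  constructor
  · rintro ⟨⟨_, hint⟩, hjs⟩; exact ⟨hjs, hint⟩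
  · rintro ⟨hjs, hint⟩; exact ⟨⟨mem_subtrees_trans hs hjs, hint⟩, hjs⟩

theorem internals_disjoint {l r : RBT α} (hN : (node l r).leafList.Nodup) :
    Disjoint l.internals r.internals := by
  rw [Finset.disjoint_left]
  intro s hsl hsr
  exact not_mem_both_subtrees hN (mem_internals.mp hsl).1 (mem_internals.mp hsr).1

theorem node_not_mem_internals_union {l r : RBT α} :
    (node l r) ∉ l.internals ∪ r.internals := by
  rw [Finset.mem_union]
  rintro (h | h)
  · exact node_not_mem_left (mem_internals.mp h).1
  · exact node_not_mem_right (mem_internals.mp h).1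

theorem card_internals_add_one {t : RBT α} (hN : t.leafList.Nodup) :
    t.internals.card + 1 = t.leafList.length := by
  induction t with
  | leaf x => simp [leafList]
  | node l r ihl ihr =>
    obtain ⟨hNl, hNr, _⟩ := nodup_node hN
    rw [internals_node, Finset.card_insert_of_notMem node_not_mem_internals_union,
      Finset.card_union_of_disjoint (internals_disjoint hN)]
    have h1 := ihl hNl
    have h2 := ihr hNr
    simp only [leafList, List.length_append]
    omega

theorem card_clade {t : RBT α} (hN : t.leafList.Nodup) :
    t.clade.card = t.leafList.length := by
  rw [clade, List.toFinset_card_of_nodup hN]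

theorem leaf_mem_subtrees {t : RBT α} {x : α} (h : x ∈ t.clade) :
    leaf x ∈ t.subtrees := by
  induction t with
  | leaf y =>
    simp [clade, leafList] at h
    subst h; simp [subtrees]
  | node l r ihl ihr =>
    rw [clade_node, Finset.mem_union] at h
    simp only [subtrees, Finset.mem_insert, Finset.mem_union]
    rcases h with h | h
    · exact Or.inr (Or.inl (ihl h))
    · exact Or.inr (Or.inr (ihr h))

theorem two_le_card_clade {s t : RBT α} (hN : t.leafList.Nodup) (h : s ∈ t.internals) :
    2 ≤ s.clade.card := by
  rw [mem_internals] at h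
  obtain ⟨hs, hint⟩ := h
  cases s with
  | leaf x => simp [isInternal] at hint
  | node a b =>
    have hNs := nodup_of_mem_subtrees hN hs
    rw [card_clade hNs]
    simp only [leafList, List.length_append]
    have := length_leafList_pos a
    have := length_leafList_pos b
    omega

end RBT
namespace RBT

variable {α : Type} [DecidableEq α]
set_option linter.unusedSectionVars false

theorem count_le {t : RBT α} (hN : t.leafList.Nodup) (C : Finset α) :
    (t.internals.filter fun s => s.clade ⊆ C).card ≤ (t.clade ∩ C).card - 1 := by
  induction t with
  | leaf x => simp
  | node l r ihl ihr =>
    obtain ⟨hNl, hNr, _⟩ := nodup_node hN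
    have hclades := clade_disjoint hN
    have hinterd : Disjoint (l.clade ∩ C) (r.clade ∩ C) :=
      hclades.mono Finset.inter_subset_left Finset.inter_subset_left
    have hinter : ((node l r).clade ∩ C).card = (l.clade ∩ C).card + (r.clade ∩ C).card := by
      rw [clade_node, Finset.union_inter_distrib_right, Finset.card_union_of_disjoint hinterd]
    have hd : Disjoint (l.internals.filter fun s => s.clade ⊆ C)
        (r.internals.filter fun s => s.clade ⊆ C) :=
      (internals_disjoint hN).mono (Finset.filter_subset _ _) (Finset.filter_subset _ _)
    have ha := ihl hNl
    have hb := ihr hNr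
    rw [internals_node, Finset.filter_insert]
    by_cases hc : (node l r).clade ⊆ C
    · rw [if_pos hc]
      have hlc : l.clade ∩ C = l.clade := Finset.inter_eq_left.mpr
        (fun x hx => hc (by rw [clade_node]; exact Finset.mem_union_left _ hx))
      have hrc : r.clade ∩ C = r.clade := Finset.inter_eq_left.mpr
        (fun x hx => hc (by rw [clade_node]; exact Finset.mem_union_right _ hx))
      have hl1 : 1 ≤ (l.clade ∩ C).card := by
        rw [hlc]; exact Finset.card_pos.mpr (clade_nonempty l)
      have hr1 : 1 ≤ (r.clade ∩ C).card := by
        rw [hrc]; exact Finset.card_pos.mpr (clade_nonempty r)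
      calc (insert (node l r) ((l.internals ∪ r.internals).filter fun s => s.clade ⊆ C)).card
          ≤ ((l.internals ∪ r.internals).filter fun s => s.clade ⊆ C).card + 1 :=
            Finset.card_insert_le _ _
        _ = (l.internals.filter fun s => s.clade ⊆ C).card
            + (r.internals.filter fun s => s.clade ⊆ C).card + 1 := by
            rw [Finset.filter_union, Finset.card_union_of_disjoint hd]
        _ ≤ ((node l r).clade ∩ C).card - 1 := by omega
    · rw [if_neg hc, Finset.filter_union, Finset.card_union_of_disjoint hd]
      omega

theorem count_le_of_not_clade {t : RBT α} (hN : t.leafList.Nodup) (C : Finset α)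
    (hsub : C ⊆ t.clade) (hCne : C.Nonempty)
    (hnc : ∀ s ∈ t.subtrees, s.clade ≠ C) :
    (t.internals.filter fun s => s.clade ⊆ C).card ≤ C.card - 2 := by
  induction t with
  | leaf x =>
    exfalso
    have : C = {x} := by
      rcases Finset.subset_singleton_iff.mp (by simpa [clade, leafList] using hsub) with h | h
      · exact absurd h hCne.ne_empty
      · exact h
    exact hnc (leaf x) (self_mem_subtrees _) (by simp [clade, leafList, this])
  | node l r ihl ihr =>
    obtain ⟨hNl, hNr, _⟩ := nodup_node hN
    have hclades := clade_disjoint hN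
    have hncl : ∀ s ∈ l.subtrees, s.clade ≠ C := fun s hs =>
      hnc s (by simp only [subtrees, Finset.mem_insert, Finset.mem_union]; tauto)
    have hncr : ∀ s ∈ r.subtrees, s.clade ≠ C := fun s hs =>
      hnc s (by simp only [subtrees, Finset.mem_insert, Finset.mem_union]; tauto)
    have htnot : ¬ (node l r).clade ⊆ C := by
      intro h
      exact hnc (node l r) (self_mem_subtrees _) (Finset.Subset.antisymm h hsub)
    have hfr0 : ∀ s ∈ r.internals, s.clade ⊆ C → s.clade ⊆ C ∩ r.clade := fun s hs hsc =>
      Finset.subset_inter hsc (clade_subset_of_mem_subtrees (internals_subset_subtrees _ hs))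
    have hfl0 : ∀ s ∈ l.internals, s.clade ⊆ C → s.clade ⊆ C ∩ l.clade := fun s hs hsc =>
      Finset.subset_inter hsc (clade_subset_of_mem_subtrees (internals_subset_subtrees _ hs))
    rw [internals_node, Finset.filter_insert, if_neg htnot, Finset.filter_union,
      Finset.card_union_of_disjoint
        ((internals_disjoint hN).mono (Finset.filter_subset _ _) (Finset.filter_subset _ _))]
    by_cases hCl : C ⊆ l.clade
    · have hr : (r.internals.filter fun s => s.clade ⊆ C) = ∅ := by
        rw [Finset.filter_eq_empty_iff]
        intro s hs hsc
        obtain ⟨x, hx⟩ := clade_nonempty s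
        have hxl : x ∈ l.clade := hCl (hsc hx)
        have hxr : x ∈ r.clade :=
          clade_subset_of_mem_subtrees (internals_subset_subtrees _ hs) hx
        have hd := hclades
        rw [Finset.disjoint_left] at hd
        exact hd hxl hxr
      rw [hr]
      simpa using ihl hNl hCl hncl
    · by_cases hCr : C ⊆ r.clade
      · have hl : (l.internals.filter fun s => s.clade ⊆ C) = ∅ := by
          rw [Finset.filter_eq_empty_iff]
          intro s hs hsc
          obtain ⟨x, hx⟩ := clade_nonempty s
          have hxr : x ∈ r.clade := hCr (hsc hx)
          have hxl : x ∈ l.clade :=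
            clade_subset_of_mem_subtrees (internals_subset_subtrees _ hs) hx
          have hd := hclades
          rw [Finset.disjoint_left] at hd
          exact hd hxl hxr
        rw [hl]
        simpa using ihr hNr hCr hncr
      · -- C meets both sides
        set Cl := C ∩ l.clade with hCldef
        set Cr := C ∩ r.clade with hCrdef
        have hClne : Cl.Nonempty := by
          obtain ⟨x, hxC, hxr⟩ := Finset.not_subset.mp hCr
          have : x ∈ (node l r).clade := hsub hxC
          rw [clade_node, Finset.mem_union] at this
          exact ⟨x, Finset.mem_inter.mpr ⟨hxC, this.resolve_right hxr⟩⟩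
        have hCrne : Cr.Nonempty := by
          obtain ⟨x, hxC, hxl⟩ := Finset.not_subset.mp hCl
          have : x ∈ (node l r).clade := hsub hxC
          rw [clade_node, Finset.mem_union] at this
          exact ⟨x, Finset.mem_inter.mpr ⟨hxC, this.resolve_left hxl⟩⟩
        have hCcard : C.card = Cl.card + Cr.card := by
          have hC : C = Cl ∪ Cr := by
            ext x
            simp only [hCldef, hCrdef, Finset.mem_union, Finset.mem_inter]
            constructor
            · intro hx
              have := hsub hx
              rw [clade_node, Finset.mem_union] at this
              tauto
            · tauto
          rw [hC, Finset.card_union_of_disjoint]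
          exact (hclades.mono Finset.inter_subset_right Finset.inter_subset_right)
        have hlcount : (l.internals.filter fun s => s.clade ⊆ C).card ≤ Cl.card - 1 := by
          have hsub1 : (l.internals.filter fun s => s.clade ⊆ C) ⊆
              (l.internals.filter fun s => s.clade ⊆ Cl) := by
            intro s hs
            rw [Finset.mem_filter] at hs ⊢
            exact ⟨hs.1, hfl0 s hs.1 hs.2⟩
          calc (l.internals.filter fun s => s.clade ⊆ C).card
              ≤ (l.internals.filter fun s => s.clade ⊆ Cl).card := Finset.card_le_card hsub1
            _ ≤ (l.clade ∩ Cl).card - 1 := count_le hNl Cl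
            _ = Cl.card - 1 := by
                rw [Finset.inter_eq_right.mpr (hCldef ▸ Finset.inter_subset_right)]
        have hrcount : (r.internals.filter fun s => s.clade ⊆ C).card ≤ Cr.card - 1 := by
          have hsub1 : (r.internals.filter fun s => s.clade ⊆ C) ⊆
              (r.internals.filter fun s => s.clade ⊆ Cr) := by
            intro s hs
            rw [Finset.mem_filter] at hs ⊢
            exact ⟨hs.1, hfr0 s hs.1 hs.2⟩
          calc (r.internals.filter fun s => s.clade ⊆ C).card
              ≤ (r.internals.filter fun s => s.clade ⊆ Cr).card := Finset.card_le_card hsub1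
            _ ≤ (r.clade ∩ Cr).card - 1 := count_le hNr Cr
            _ = Cr.card - 1 := by
                rw [Finset.inter_eq_right.mpr (hCrdef ▸ Finset.inter_subset_right)]
        have h1 : 1 ≤ Cl.card := Finset.card_pos.mpr hClne
        have h2 : 1 ≤ Cr.card := Finset.card_pos.mpr hCrne
        omega

theorem card_image_clade {t : RBT α} (hN : t.leafList.Nodup) :
    (t.subtrees.image clade).card = 2 * t.leafList.length - 1 := by
  induction t with
  | leaf x => simp [subtrees, leafList]
  | node l r ihl ihr =>
    obtain ⟨hNl, hNr, _⟩ := nodup_node hN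
    have hclades := clade_disjoint hN
    have hst : (node l r).subtrees = insert (node l r) (l.subtrees ∪ r.subtrees) := rfl
    rw [hst, Finset.image_insert, Finset.image_union]
    have hnotmem : (node l r).clade ∉ l.subtrees.image clade ∪ r.subtrees.image clade := by
      rw [Finset.mem_union]
      rintro (h | h)
      · obtain ⟨s, hs, hsc⟩ := Finset.mem_image.mp h
        have h1 : s.clade.card ≤ l.clade.card :=
          Finset.card_le_card (clade_subset_of_mem_subtrees hs)
        rw [hsc, card_clade hN, card_clade hNl] at h1
        have := length_leafList_pos r
        simp only [leafList, List.length_append] at h1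
        omega
      · obtain ⟨s, hs, hsc⟩ := Finset.mem_image.mp h
        have h1 : s.clade.card ≤ r.clade.card :=
          Finset.card_le_card (clade_subset_of_mem_subtrees hs)
        rw [hsc, card_clade hN, card_clade hNr] at h1
        have := length_leafList_pos l
        simp only [leafList, List.length_append] at h1
        omega
    have hdisj : Disjoint (l.subtrees.image clade) (r.subtrees.image clade) := by
      rw [Finset.disjoint_left]
      rintro C hCl hCr
      obtain ⟨s1, hs1, rfl⟩ := Finset.mem_image.mp hCl
      obtain ⟨s2, hs2, hs2c⟩ := Finset.mem_image.mp hCr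
      obtain ⟨x, hx⟩ := clade_nonempty s1
      have hxl : x ∈ l.clade := clade_subset_of_mem_subtrees hs1 hx
      have hxr : x ∈ r.clade := clade_subset_of_mem_subtrees hs2 (hs2c ▸ hx)
      have hd := hclades
      rw [Finset.disjoint_left] at hd
      exact hd hxl hxr
    rw [Finset.card_insert_of_notMem hnotmem, Finset.card_union_of_disjoint hdisj,
      ihl hNl, ihr hNr]
    have := length_leafList_pos l
    have := length_leafList_pos r
    simp only [leafList, List.length_append]
    omega

theorem shrink_upset (t : RBT α) (V : Finset (RBT α)) :
    V ⊆ t.internals →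
    (∀ i ∈ t.internals, ∀ j ∈ V, Anc i j → i ∈ V) →
    ∀ c, c ≤ V.card →
    ∃ U, U ⊆ V ∧ U.card = c ∧ ∀ i ∈ t.internals, ∀ j ∈ U, Anc i j → i ∈ U := by
  induction V using Finset.strongInduction with
  | _ V ih =>
    intro hVsub hVup c hc
    rcases eq_or_lt_of_le hc with heq | hlt
    · exact ⟨V, Finset.Subset.refl _, heq.symm, hVup⟩
    · have hV : V.Nonempty := Finset.card_pos.mp (lt_of_le_of_lt (Nat.zero_le c) hlt)
      obtain ⟨v, hv, hmin⟩ := V.exists_min_image (fun s => s.leafList.length) hV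
      have hss : V.erase v ⊂ V := Finset.erase_ssubset hv
      have up' : ∀ i ∈ t.internals, ∀ j ∈ V.erase v, Anc i j → i ∈ V.erase v := by
        intro i hi j hj hij
        have hjV : j ∈ V := Finset.mem_of_mem_erase hj
        have hiV : i ∈ V := hVup i hi j hjV hij
        refine Finset.mem_erase.mpr ⟨?_, hiV⟩
        intro hiv
        rw [hiv] at hij
        have hjv : j ≠ v := Finset.ne_of_mem_erase hj
        rcases eq_or_length_lt_of_mem_subtrees hij with h | h
        · exact hjv h
        · have := hmin j hjV
          omega
      have hc' : c ≤ (V.erase v).card := by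
        have := Finset.card_erase_of_mem hv
        omega
      obtain ⟨U, hU1, hU2, hU3⟩ := ih (V.erase v) hss
        (fun s hs => hVsub (Finset.mem_of_mem_erase hs)) up' c hc'
      exact ⟨U, hU1.trans (Finset.erase_subset _ _), hU2, hU3⟩

theorem sum_internals_le (t : RBT α) (y : RBT α → ℕ)
    (hcon : ∀ i ∈ t.internals,
      ∑ j ∈ t.internals.filter (fun j => Anc i j), y j ≤ i.clade.card - 1)
    (s : RBT α) (hs : s ∈ t.subtrees) :
    ∑ j ∈ s.internals, y j ≤ s.clade.card - 1 := by
  cases s with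
  | leaf a => simp
  | node a b =>
    have hsint : node a b ∈ t.internals := mem_internals.mpr ⟨hs, rfl⟩
    have := hcon _ hsint
    rwa [filter_anc hs] at this

end RBT
namespace RBT

variable {α : Type} [DecidableEq α]
set_option linter.unusedSectionVars false
set_option maxHeartbeats 1000000

theorem exists_history :
    ∀ (t : RBT α), t.leafList.Nodup → ∀ (y : RBT α → ℕ),
    (∀ i ∈ t.internals,
      ∑ j ∈ t.internals.filter (fun j => Anc i j), y j ≤ i.clade.card - 1) →
    ∀ c : ℕ, (∑ j ∈ t.internals, y j) + c = t.clade.card - 1 →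
    ∃ (U : Finset (RBT α)) (h : RBT α → RBT α),
      U ⊆ t.internals ∧ U.card = c ∧
      (∀ i ∈ t.internals, ∀ j ∈ U, Anc i j → i ∈ U) ∧
      (∀ j ∈ t.internals, j ∉ U → h j ∈ t.internals ∧ Anc (h j) j) ∧
      (∀ i ∈ t.internals, ∀ j ∈ t.internals, i ∉ U → j ∉ U → Anc i j → Anc (h i) (h j)) ∧
      (∀ i ∈ t.internals, ((t.internals \ U).filter fun j => h j = i).card = y i) := by
  intro t
  induction t with
  | leaf x =>
    intro hN y hcon c htot
    have hc : c = 0 := by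
      simp [clade, leafList] at htot
      omega
    subst hc
    exact ⟨∅, id, by simp, by simp, by simp, by simp, by simp, by simp⟩
  | node l r ihl ihr =>
    intro hN y hcon c htot
    classical
    obtain ⟨hNl, hNr, _⟩ := nodup_node hN
    have hlsub : l ∈ (node l r).subtrees := by
      simp only [subtrees, Finset.mem_insert, Finset.mem_union]
      exact Or.inr (Or.inl (self_mem_subtrees l))
    have hrsub : r ∈ (node l r).subtrees := by
      simp only [subtrees, Finset.mem_insert, Finset.mem_union]
      exact Or.inr (Or.inr (self_mem_subtrees r))
    have hrootint : node l r ∈ (node l r).internals :=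
      mem_internals.mpr ⟨self_mem_subtrees _, rfl⟩
    have hIl : l.internals ⊆ (node l r).internals := internals_mono hlsub
    have hIr : r.internals ⊆ (node l r).internals := internals_mono hrsub
    have hIdisj := internals_disjoint hN
    have hnotmem := node_not_mem_internals_union (l := l) (r := r)
    have hsumdec : ∑ j ∈ (node l r).internals, y j
        = y (node l r) + ∑ j ∈ l.internals, y j + ∑ j ∈ r.internals, y j := by
      rw [internals_node, Finset.sum_insert hnotmem, Finset.sum_union hIdisj]
      ring
    have hconl : ∀ i ∈ l.internals,
        ∑ j ∈ l.internals.filter (fun j => Anc i j), y j ≤ i.clade.card - 1 := by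
      intro i hi
      have hisub : i ∈ (node l r).subtrees :=
        mem_subtrees_trans hlsub (internals_subset_subtrees _ hi)
      have hisubl : i ∈ l.subtrees := internals_subset_subtrees _ hi
      have := hcon i (hIl hi)
      rwa [filter_anc hisub, ← filter_anc hisubl] at this
    have hconr : ∀ i ∈ r.internals,
        ∑ j ∈ r.internals.filter (fun j => Anc i j), y j ≤ i.clade.card - 1 := by
      intro i hi
      have hisub : i ∈ (node l r).subtrees :=
        mem_subtrees_trans hrsub (internals_subset_subtrees _ hi)
      have hisubr : i ∈ r.subtrees := internals_subset_subtrees _ hi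
      have := hcon i (hIr hi)
      rwa [filter_anc hisub, ← filter_anc hisubr] at this
    have hsl : ∑ j ∈ l.internals, y j ≤ l.clade.card - 1 :=
      sum_internals_le _ y hcon l hlsub
    have hsr : ∑ j ∈ r.internals, y j ≤ r.clade.card - 1 :=
      sum_internals_le _ y hcon r hrsub
    have hlc1 : 1 ≤ l.clade.card := Finset.card_pos.mpr (clade_nonempty l)
    have hrc1 : 1 ≤ r.clade.card := Finset.card_pos.mpr (clade_nonempty r)
    have htc : (node l r).clade.card = l.clade.card + r.clade.card := by
      rw [clade_node, Finset.card_union_of_disjoint (clade_disjoint hN)]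
    set cl := l.clade.card - 1 - ∑ j ∈ l.internals, y j with hcldef
    set cr := r.clade.card - 1 - ∑ j ∈ r.internals, y j with hcrdef
    have htotl : (∑ j ∈ l.internals, y j) + cl = l.clade.card - 1 := by omega
    have htotr : (∑ j ∈ r.internals, y j) + cr = r.clade.card - 1 := by omega
    obtain ⟨Ul, hl, hUl_sub, hUl_card, hUl_up, hl_dom, hl_mono, hl_fib⟩ :=
      ihl hNl y hconl cl htotl
    obtain ⟨Ur, hr, hUr_sub, hUr_card, hUr_up, hr_dom, hr_mono, hr_fib⟩ :=
      ihr hNr y hconr cr htotr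
    have harith : cl + cr + 1 = c + y (node l r) := by omega
    set U' : Finset (RBT α) := insert (node l r) (Ul ∪ Ur) with hU'def
    have hUUnotmem : node l r ∉ Ul ∪ Ur := fun hm =>
      hnotmem (Finset.union_subset_union hUl_sub hUr_sub hm)
    have hUdisj : Disjoint Ul Ur := hIdisj.mono hUl_sub hUr_sub
    have hU'card : U'.card = c + y (node l r) := by
      rw [hU'def, Finset.card_insert_of_notMem hUUnotmem,
        Finset.card_union_of_disjoint hUdisj, hUl_card, hUr_card]
      omega
    have hU'subint : U' ⊆ (node l r).internals :=
      Finset.insert_subset_iff.mpr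
        ⟨hrootint, Finset.union_subset (hUl_sub.trans hIl) (hUr_sub.trans hIr)⟩
    have hU'up : ∀ i ∈ (node l r).internals, ∀ j ∈ U', Anc i j → i ∈ U' := by
      intro i hi j hj hij
      rcases Finset.mem_insert.mp hj with rfl | hjm
      · -- j = node l r; Anc i (node l r) → i = node l r
        have hi' : i ∈ (node l r).subtrees := internals_subset_subtrees _ hi
        have : i = node l r := mem_subtrees_antisymm hi' hij
        rw [this]
        exact Finset.mem_insert_self _ _
      · rcases Finset.mem_union.mp hjm with hjl | hjr
        · -- j ∈ Ul
          rw [internals_node] at hi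
          rcases Finset.mem_insert.mp hi with rfl | him
          · exact Finset.mem_insert_self _ _
          · rcases Finset.mem_union.mp him with hil | hir
            · exact Finset.mem_insert.mpr (Or.inr (Finset.mem_union_left _
                (hUl_up i hil j hjl hij)))
            · exfalso
              have h1 : j ∈ r.subtrees :=
                mem_subtrees_trans (internals_subset_subtrees _ hir) hij
              have h2 : j ∈ l.subtrees :=
                internals_subset_subtrees _ (hUl_sub hjl)
              exact not_mem_both_subtrees hN h2 h1
        · -- j ∈ Ur
          rw [internals_node] at hi
          rcases Finset.mem_insert.mp hi with rfl | him
          · exact Finset.mem_insert_self _ _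
          · rcases Finset.mem_union.mp him with hil | hir
            · exfalso
              have h1 : j ∈ l.subtrees :=
                mem_subtrees_trans (internals_subset_subtrees _ hil) hij
              have h2 : j ∈ r.subtrees :=
                internals_subset_subtrees _ (hUr_sub hjr)
              exact not_mem_both_subtrees hN h1 h2
            · exact Finset.mem_insert.mpr (Or.inr (Finset.mem_union_right _
                (hUr_up i hir j hjr hij)))
    obtain ⟨U, hUsub', hUcard, hUup⟩ :=
      shrink_upset (node l r) U' hU'subint hU'up c (by omega)
    set hfun : RBT α → RBT α := fun j =>
      if j ∈ U' \ U then node l r else if j ∈ l.internals then hl j else hr j with hhfun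
    -- cell facts
    have hUl_cell : ∀ j ∈ l.internals, j ∉ Ul → j ∉ U' := by
      intro j hj hjUl hjU'
      rcases Finset.mem_insert.mp hjU' with rfl | hjm
      · exact node_not_mem_left (internals_subset_subtrees _ hj)
      · rcases Finset.mem_union.mp hjm with hm | hm
        · exact hjUl hm
        · exact (Finset.disjoint_left.mp hIdisj hj) (hUr_sub hm)
    have hUr_cell : ∀ j ∈ r.internals, j ∉ Ur → j ∉ U' := by
      intro j hj hjUr hjU'
      rcases Finset.mem_insert.mp hjU' with rfl | hjm
      · exact node_not_mem_right (internals_subset_subtrees _ hj)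
      · rcases Finset.mem_union.mp hjm with hm | hm
        · exact (Finset.disjoint_right.mp hIdisj hj) (hUl_sub hm)
        · exact hjUr hm
    have hval_top : ∀ j ∈ U' \ U, hfun j = node l r := by
      intro j hj
      simp only [hhfun]
      rw [if_pos hj]
    have hval_l : ∀ j ∈ l.internals, j ∉ Ul → hfun j = hl j := by
      intro j hj hjUl
      have h1 : j ∉ U' \ U := fun hm => (hUl_cell j hj hjUl) (Finset.mem_sdiff.mp hm).1
      simp only [hhfun]
      rw [if_neg h1, if_pos hj]
    have hval_r : ∀ j ∈ r.internals, j ∉ Ur → hfun j = hr j := by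
      intro j hj hjUr
      have h1 : j ∉ U' \ U := fun hm => (hUr_cell j hj hjUr) (Finset.mem_sdiff.mp hm).1
      have h2 : j ∉ l.internals := Finset.disjoint_right.mp hIdisj hj
      simp only [hhfun]
      rw [if_neg h1, if_neg h2]
    have hcellU : ∀ j ∈ l.internals, j ∉ Ul → j ∉ U :=
      fun j hj hjUl hjU => hUl_cell j hj hjUl (hUsub' hjU)
    have hcellUr : ∀ j ∈ r.internals, j ∉ Ur → j ∉ U :=
      fun j hj hjUr hjU => hUr_cell j hj hjUr (hUsub' hjU)
    have hdecomp : (node l r).internals \ U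
        = (U' \ U) ∪ ((l.internals \ Ul) ∪ (r.internals \ Ur)) := by
      ext j
      simp only [Finset.mem_sdiff, Finset.mem_union, internals_node, Finset.mem_insert]
      constructor
      · rintro ⟨(rfl | hjl | hjr), hjU⟩
        · exact Or.inl ⟨Finset.mem_insert_self _ _, hjU⟩
        · by_cases hjUl : j ∈ Ul
          · exact Or.inl ⟨Finset.mem_insert.mpr (Or.inr (Finset.mem_union_left _ hjUl)), hjU⟩
          · exact Or.inr (Or.inl ⟨hjl, hjUl⟩)
        · by_cases hjUr : j ∈ Ur
          · exact Or.inl ⟨Finset.mem_insert.mpr (Or.inr (Finset.mem_union_right _ hjUr)), hjU⟩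
          · exact Or.inr (Or.inr ⟨hjr, hjUr⟩)
      · rintro (⟨hjU', hjU⟩ | ⟨hjl, hjUl⟩ | ⟨hjr, hjUr⟩)
        · refine ⟨?_, hjU⟩
          have := hU'subint hjU'
          rw [internals_node] at this
          rcases Finset.mem_insert.mp this with hh | hh
          · exact Or.inl hh
          · rcases Finset.mem_union.mp hh with hh | hh
            · exact Or.inr (Or.inl hh)
            · exact Or.inr (Or.inr hh)
        · exact ⟨Or.inr (Or.inl hjl), hcellU j hjl hjUl⟩
        · exact ⟨Or.inr (Or.inr hjr), hcellUr j hjr hjUr⟩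
    have hd1 : Disjoint (U' \ U) (l.internals \ Ul) := by
      rw [Finset.disjoint_right]
      intro j hj
      rw [Finset.mem_sdiff] at hj
      intro hm
      exact hUl_cell j hj.1 hj.2 (Finset.mem_sdiff.mp hm).1
    have hd2 : Disjoint (U' \ U) (r.internals \ Ur) := by
      rw [Finset.disjoint_right]
      intro j hj
      rw [Finset.mem_sdiff] at hj
      intro hm
      exact hUr_cell j hj.1 hj.2 (Finset.mem_sdiff.mp hm).1
    have hd3 : Disjoint (l.internals \ Ul) (r.internals \ Ur) :=
      hIdisj.mono (Finset.sdiff_subset) (Finset.sdiff_subset)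
    refine ⟨U, hfun, hUsub'.trans hU'subint, hUcard, hUup, ?_, ?_, ?_⟩
    · -- domain condition
      intro j hj hjU
      have hj' : j ∈ (node l r).internals \ U := Finset.mem_sdiff.mpr ⟨hj, hjU⟩
      rw [hdecomp] at hj'
      rcases Finset.mem_union.mp hj' with hm | hm
      · rw [hval_top j hm]
        exact ⟨hrootint, internals_subset_subtrees _ hj⟩
      · rcases Finset.mem_union.mp hm with hm | hm
        · obtain ⟨hjl, hjUl⟩ := Finset.mem_sdiff.mp hm
          rw [hval_l j hjl hjUl]
          obtain ⟨hmem, hanc⟩ := hl_dom j hjl hjUl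
          exact ⟨hIl hmem, hanc⟩
        · obtain ⟨hjr, hjUr⟩ := Finset.mem_sdiff.mp hm
          rw [hval_r j hjr hjUr]
          obtain ⟨hmem, hanc⟩ := hr_dom j hjr hjUr
          exact ⟨hIr hmem, hanc⟩
    · -- monotonicity
      intro i hi j hj hiU hjU hij
      have hi' : i ∈ (node l r).internals \ U := Finset.mem_sdiff.mpr ⟨hi, hiU⟩
      have hj' : j ∈ (node l r).internals \ U := Finset.mem_sdiff.mpr ⟨hj, hjU⟩
      rw [hdecomp] at hi' hj'
      rcases Finset.mem_union.mp hj' with hjm | hjm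
      · -- j ∈ U' \ U : h j = root, and i must be in U' \ U too
        have hjU' : j ∈ U' := (Finset.mem_sdiff.mp hjm).1
        have hiU' : i ∈ U' := hU'up i hi j hjU' hij
        have him : i ∈ U' \ U := Finset.mem_sdiff.mpr ⟨hiU', hiU⟩
        rw [hval_top i him, hval_top j hjm]
        exact self_mem_subtrees _
      · rcases Finset.mem_union.mp hjm with hjm | hjm
        · -- j ∈ l.internals \ Ul
          obtain ⟨hjl, hjUl⟩ := Finset.mem_sdiff.mp hjm
          rw [hval_l j hjl hjUl]
          rcases Finset.mem_union.mp hi' with him | him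
          · rw [hval_top i him]
            exact internals_subset_subtrees _ (hIl (hl_dom j hjl hjUl).1)
          · rcases Finset.mem_union.mp him with him | him
            · obtain ⟨hil, hiUl⟩ := Finset.mem_sdiff.mp him
              rw [hval_l i hil hiUl]
              exact hl_mono i hil j hjl hiUl hjUl hij
            · exfalso
              obtain ⟨hir, _⟩ := Finset.mem_sdiff.mp him
              have h1 : j ∈ r.subtrees :=
                mem_subtrees_trans (internals_subset_subtrees _ hir) hij
              exact not_mem_both_subtrees hN (internals_subset_subtrees _ hjl) h1
        · -- j ∈ r.internals \ Ur
          obtain ⟨hjr, hjUr⟩ := Finset.mem_sdiff.mp hjm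
          rw [hval_r j hjr hjUr]
          rcases Finset.mem_union.mp hi' with him | him
          · rw [hval_top i him]
            exact internals_subset_subtrees _ (hIr (hr_dom j hjr hjUr).1)
          · rcases Finset.mem_union.mp him with him | him
            · exfalso
              obtain ⟨hil, _⟩ := Finset.mem_sdiff.mp him
              have h1 : j ∈ l.subtrees :=
                mem_subtrees_trans (internals_subset_subtrees _ hil) hij
              exact not_mem_both_subtrees hN h1 (internals_subset_subtrees _ hjr)
            · obtain ⟨hir, hiUr⟩ := Finset.mem_sdiff.mp him
              rw [hval_r i hir hiUr]
              exact hr_mono i hir j hjr hiUr hjUr hij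
    · -- fibers
      intro i hi
      rw [hdecomp, Finset.filter_union, Finset.filter_union,
        Finset.card_union_of_disjoint, Finset.card_union_of_disjoint]
      rotate_left
      · exact hd3.mono (Finset.filter_subset _ _) (Finset.filter_subset _ _)
      · exact (Finset.disjoint_union_right.mpr ⟨hd1, hd2⟩).mono
          (Finset.filter_subset _ _)
          (Finset.union_subset_union (Finset.filter_subset _ _) (Finset.filter_subset _ _))
      rw [internals_node] at hi
      rcases Finset.mem_insert.mp hi with rfl | him
      · -- i = node l r
        have hA : (U' \ U).filter (fun j => hfun j = node l r) = U' \ U :=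
          Finset.filter_true_of_mem hval_top
        have hB : (l.internals \ Ul).filter (fun j => hfun j = node l r) = ∅ := by
          rw [Finset.filter_eq_empty_iff]
          intro j hj
          obtain ⟨hjl, hjUl⟩ := Finset.mem_sdiff.mp hj
          rw [hval_l j hjl hjUl]
          intro hcontra
          exact node_not_mem_left
            (internals_subset_subtrees _ (hcontra ▸ (hl_dom j hjl hjUl).1))
        have hC : (r.internals \ Ur).filter (fun j => hfun j = node l r) = ∅ := by
          rw [Finset.filter_eq_empty_iff]
          intro j hj
          obtain ⟨hjr, hjUr⟩ := Finset.mem_sdiff.mp hj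
          rw [hval_r j hjr hjUr]
          intro hcontra
          exact node_not_mem_right
            (internals_subset_subtrees _ (hcontra ▸ (hr_dom j hjr hjUr).1))
        rw [hA, hB, hC, Finset.card_sdiff_of_subset (hUsub')]
        simp only [Finset.card_empty]
        omega
      · rcases Finset.mem_union.mp him with him | him
        · -- i ∈ l.internals
          have hA : (U' \ U).filter (fun j => hfun j = i) = ∅ := by
            rw [Finset.filter_eq_empty_iff]
            intro j hj
            rw [hval_top j hj]
            intro hcontra
            exact node_not_mem_left (internals_subset_subtrees _ (hcontra ▸ him))
          have hB : ((l.internals \ Ul).filter (fun j => hfun j = i)).card = y i := by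
            rw [Finset.filter_congr (fun j hj => by
              obtain ⟨hjl, hjUl⟩ := Finset.mem_sdiff.mp hj
              rw [hval_l j hjl hjUl])]
            exact hl_fib i him
          have hC : (r.internals \ Ur).filter (fun j => hfun j = i) = ∅ := by
            rw [Finset.filter_eq_empty_iff]
            intro j hj
            obtain ⟨hjr, hjUr⟩ := Finset.mem_sdiff.mp hj
            rw [hval_r j hjr hjUr]
            intro hcontra
            exact Finset.disjoint_left.mp hIdisj him (hcontra ▸ (hr_dom j hjr hjUr).1)
          rw [hA, hC]
          simp only [Finset.card_empty]
          omega
        · -- i ∈ r.internals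
          have hA : (U' \ U).filter (fun j => hfun j = i) = ∅ := by
            rw [Finset.filter_eq_empty_iff]
            intro j hj
            rw [hval_top j hj]
            intro hcontra
            exact node_not_mem_right (internals_subset_subtrees _ (hcontra ▸ him))
          have hB : ((r.internals \ Ur).filter (fun j => hfun j = i)).card = y i := by
            rw [Finset.filter_congr (fun j hj => by
              obtain ⟨hjr, hjUr⟩ := Finset.mem_sdiff.mp hj
              rw [hval_r j hjr hjUr])]
            exact hr_fib i him
          have hC : (l.internals \ Ul).filter (fun j => hfun j = i) = ∅ := by
            rw [Finset.filter_eq_empty_iff]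
            intro j hj
            obtain ⟨hjl, hjUl⟩ := Finset.mem_sdiff.mp hj
            rw [hval_l j hjl hjUl]
            intro hcontra
            exact Finset.disjoint_left.mp hIdisj (hcontra ▸ (hl_dom j hjl hjUl).1) him
          rw [hA, hC]
          simp only [Finset.card_empty]
          omega

end RBT
namespace RBT

variable {α : Type} [DecidableEq α]
set_option linter.unusedSectionVars false
set_option maxHeartbeats 1000000

theorem sum_coe_filter (s : Finset (RBT α)) (P : RBT α → Prop) [DecidablePred P]
    (f : RBT α → ℕ) :
    ∑ j ∈ Finset.univ.filter (fun j : ↥s => P ↑j), f ↑j = ∑ j ∈ s.filter P, f j := by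
  rw [Finset.sum_filter, Finset.sum_coe_sort s (fun j => if P j then f j else 0),
    ← Finset.sum_filter]

theorem card_coe_filter (s : Finset (RBT α)) (P : RBT α → Prop) [DecidablePred P] :
    (Finset.univ.filter fun j : ↥s => P ↑j).card = (s.filter P).card := by
  rw [Finset.card_filter, Finset.card_filter,
    Finset.sum_coe_sort s (fun j => if P j then 1 else 0)]

theorem sum_phi_le {ψ T : RBT α} (h : ↥T.internals → ↥ψ.internals)
    (hh : IsCoalHistory ψ T h) (i : ↥ψ.internals) :
    ∑ j ∈ Finset.univ.filter (fun j : ↥ψ.internals => Anc (i : RBT α) (j : RBT α)),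
        Phi ψ T h j
      ≤ (T.internals.filter fun s => s.clade ⊆ (i : RBT α).clade).card := by
  classical
  set S : Finset ↥T.internals :=
    Finset.univ.filter fun k => Anc (i : RBT α) ((h k : RBT α)) with hS
  have hcard : S.card = ∑ j ∈ Finset.univ.filter
      (fun j : ↥ψ.internals => Anc (i : RBT α) (j : RBT α)),
      (S.filter fun k => h k = j).card := by
    apply Finset.card_eq_sum_card_fiberwise
    intro k hk
    rw [hS, Finset.mem_coe, Finset.mem_filter] at hk
    exact Finset.mem_coe.mpr (Finset.mem_filter.mpr ⟨Finset.mem_univ _, hk.2⟩)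
  have hfib : ∀ j ∈ Finset.univ.filter
      (fun j : ↥ψ.internals => Anc (i : RBT α) (j : RBT α)),
      (S.filter fun k => h k = j).card = Phi ψ T h j := by
    intro j hj
    rw [Finset.mem_filter] at hj
    unfold Phi
    congr 1
    ext k
    simp only [hS, Finset.mem_filter, Finset.mem_univ, true_and]
    constructor
    · exact fun hk => hk.2
    · intro hk
      refine ⟨?_, hk⟩
      rw [hk]
      exact hj.2
  rw [← Finset.sum_congr rfl hfib, ← hcard]
  have himg : S.image Subtype.val
      ⊆ T.internals.filter (fun s => s.clade ⊆ (i : RBT α).clade) := by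
    intro s hs
    obtain ⟨k, hk, rfl⟩ := Finset.mem_image.mp hs
    rw [hS, Finset.mem_filter] at hk
    refine Finset.mem_filter.mpr ⟨k.2, ?_⟩
    exact (hh.1 k).trans (clade_subset_of_mem_subtrees hk.2)
  calc S.card = (S.image Subtype.val).card :=
        (Finset.card_image_of_injOn (fun a _ b _ hab => Subtype.ext hab)).symm
    _ ≤ _ := Finset.card_le_card himg

theorem phi_mem_popHistories {X : Finset α} {n : ℕ} (hn : X.card = n)
    {ψ T : RBT α} (hψ : ψ.IsTreeOn X) (hT : T.IsTreeOn X)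
    {h : ↥T.internals → ↥ψ.internals} (hh : h ∈ coalHistories ψ T) :
    Phi ψ T h ∈ popHistories ψ n := by
  classical
  have hcardT : T.internals.card + 1 = n := by
    rw [card_internals_add_one hT.1, ← card_clade hT.1, hT.2, hn]
  constructor
  · -- total sum
    have h1 : (Finset.univ : Finset ↥T.internals).card
        = ∑ b ∈ (Finset.univ : Finset ↥ψ.internals),
            (Finset.univ.filter fun k : ↥T.internals => h k = b).card :=
      Finset.card_eq_sum_card_fiberwise (fun x _ => Finset.mem_univ _)
    have h2 : (Finset.univ : Finset ↥T.internals).card = T.internals.card := by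
      rw [Finset.card_univ, Fintype.card_coe]
    unfold Phi
    rw [← h1, h2]
    omega
  · intro i
    calc ∑ j ∈ Finset.univ.filter
          (fun j : ↥ψ.internals => Anc (i : RBT α) (j : RBT α)), Phi ψ T h j
        ≤ (T.internals.filter fun s => s.clade ⊆ (i : RBT α).clade).card :=
          sum_phi_le h hh i
      _ ≤ (T.clade ∩ (i : RBT α).clade).card - 1 := count_le hT.1 _
      _ = (i : RBT α).clade.card - 1 := by
          have hss : (i : RBT α).clade ⊆ X := by
            have := clade_subset_of_mem_subtrees (internals_subset_subtrees _ i.2)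
            rwa [hψ.2] at this
          rw [hT.2, Finset.inter_eq_right.mpr hss]

theorem root_mem_internals {X : Finset α} {n : ℕ} (hn : X.card = n) (h2 : 2 ≤ n)
    {ψ : RBT α} (hψ : ψ.IsTreeOn X) : ψ ∈ ψ.internals := by
  cases ψ with
  | leaf x =>
    exfalso
    have : X.card = 1 := by
      rw [← hψ.2]
      simp [clade, leafList]
    omega
  | node l r => exact mem_internals.mpr ⟨self_mem_subtrees _, rfl⟩

theorem popHistories_subset_phi {X : Finset α} {n : ℕ} (hn : X.card = n)
    {ψ : RBT α} (hψ : ψ.IsTreeOn X) :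
    popHistories ψ n ⊆ Phi ψ ψ '' coalHistories ψ ψ := by
  classical
  intro y hy
  set Y : RBT α → ℕ := fun s => if hs : s ∈ ψ.internals then y ⟨s, hs⟩ else 0 with hY
  have hYeq : ∀ j : ↥ψ.internals, Y ↑j = y j := by
    intro j
    simp only [hY]
    rw [dif_pos j.2]
  have hcon : ∀ i ∈ ψ.internals,
      ∑ j ∈ ψ.internals.filter (fun j => Anc i j), Y j ≤ i.clade.card - 1 := by
    intro i hi
    have h1 := hy.2 ⟨i, hi⟩
    rw [← sum_coe_filter ψ.internals (fun j => Anc i j) Y]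
    calc ∑ j ∈ Finset.univ.filter (fun j : ↥ψ.internals => Anc i ↑j), Y ↑j
        = ∑ j ∈ Finset.univ.filter (fun j : ↥ψ.internals => Anc i ↑j), y j :=
          Finset.sum_congr rfl (fun j _ => hYeq j)
      _ ≤ i.clade.card - 1 := h1
  have htot : (∑ j ∈ ψ.internals, Y j) + 0 = ψ.clade.card - 1 := by
    have h1 : ∑ j ∈ ψ.internals, Y j = ∑ j : ↥ψ.internals, y j := by
      rw [← Finset.sum_coe_sort ψ.internals Y]
      exact Finset.sum_congr rfl (fun j _ => hYeq j)
    rw [h1, hy.1, hψ.2, hn]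
    omega
  obtain ⟨U, hf, hU1, hU2, hU3, h4, h5, h6⟩ := exists_history ψ hψ.1 Y hcon 0 htot
  have hUe : U = ∅ := Finset.card_eq_zero.mp hU2
  subst hUe
  refine ⟨fun j => ⟨hf ↑j, (h4 ↑j j.2 (Finset.notMem_empty _)).1⟩, ⟨?_, ?_⟩, ?_⟩
  · intro j
    exact clade_subset_of_mem_subtrees (h4 ↑j j.2 (Finset.notMem_empty _)).2
  · intro i j hij
    exact h5 ↑i i.2 ↑j j.2 (Finset.notMem_empty _) (Finset.notMem_empty _) hij
  · funext i
    unfold Phi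
    have hcongr : (Finset.univ.filter fun j : ↥ψ.internals =>
        (⟨hf ↑j, (h4 ↑j j.2 (Finset.notMem_empty _)).1⟩ : ↥ψ.internals) = i)
        = Finset.univ.filter fun j : ↥ψ.internals => hf ↑j = ↑i := by
      apply Finset.filter_congr
      intro j _
      rw [Subtype.ext_iff]
    rw [hcongr, card_coe_filter ψ.internals (fun s => hf s = ↑i)]
    have := h6 ↑i i.2
    rw [Finset.sdiff_empty] at this
    rw [this, hYeq i]

theorem exists_witness {X : Finset α} {n : ℕ} (hn : X.card = n) (h2 : 2 ≤ n)
    {ψ T : RBT α} (hψ : ψ.IsTreeOn X) (hT : T.IsTreeOn X)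
    (hne : T.cladeSet ≠ ψ.cladeSet) :
    ∃ y ∈ popHistories ψ n, y ∉ Phi ψ T '' coalHistories ψ T := by
  classical
  -- find a clade of ψ that is not a clade of T
  have hex : ∃ v ∈ ψ.subtrees, ∀ s ∈ T.subtrees, s.clade ≠ v.clade := by
    by_contra hcon
    push_neg at hcon
    have hsub : ψ.subtrees.image clade ⊆ T.subtrees.image clade := by
      intro C hC
      obtain ⟨v, hv, rfl⟩ := Finset.mem_image.mp hC
      obtain ⟨s, hs, hsc⟩ := hcon v hv
      exact Finset.mem_image.mpr ⟨s, hs, hsc⟩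
    have h1 := card_image_clade hψ.1
    have h2' := card_image_clade hT.1
    have hlen : ψ.leafList.length = T.leafList.length := by
      rw [← card_clade hψ.1, ← card_clade hT.1, hψ.2, hT.2]
    have heq : ψ.subtrees.image clade = T.subtrees.image clade :=
      Finset.eq_of_subset_of_card_le hsub (by omega)
    apply hne
    have hcs : ∀ t : RBT α, t.cladeSet = ↑(t.subtrees.image clade) := by
      intro t
      ext C
      rw [Finset.mem_coe, Finset.mem_image]
      exact Iff.rfl
    rw [hcs, hcs, heq]
  obtain ⟨v, hvsub, hvnc⟩ := hex
  -- v is internal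
  have hvint : v ∈ ψ.internals := by
    cases v with
    | leaf x =>
      exfalso
      have hx : x ∈ T.clade := by
        rw [hT.2, ← hψ.2]
        exact clade_subset_of_mem_subtrees hvsub (by simp [clade, leafList])
      exact hvnc (leaf x) (leaf_mem_subtrees hx) rfl
    | node a b => exact mem_internals.mpr ⟨hvsub, rfl⟩
  set m := v.clade.card with hm
  have hm2 : 2 ≤ m := two_le_card_clade hψ.1 hvint
  have hmn : m ≤ n := by
    rw [hm, ← hn, ← hψ.2]
    exact Finset.card_le_card (clade_subset_of_mem_subtrees hvsub)
  have hvne : v ≠ ψ := by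
    intro hveq
    apply hvnc T (self_mem_subtrees T)
    rw [hveq, hψ.2, hT.2]
  have hroot : ψ ∈ ψ.internals := root_mem_internals hn h2 hψ
  have hvcard : v.internals.card = m - 1 := by
    have h1 := card_internals_add_one (nodup_of_mem_subtrees hψ.1 hvsub)
    have h2' := card_clade (nodup_of_mem_subtrees hψ.1 hvsub)
    omega
  -- the witness
  set y : ↥ψ.internals → ℕ := fun j =>
    (if Anc v ↑j then 1 else 0) + (if (↑j : RBT α) = ψ then n - m else 0) with hy
  have hsum : ∀ F : Finset ↥ψ.internals, ∑ j ∈ F, y j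
      = (F.filter (fun j : ↥ψ.internals => Anc v (j : RBT α))).card
        + (F.filter (fun j : ↥ψ.internals => (j : RBT α) = ψ)).card * (n - m) := by
    intro F
    rw [hy, Finset.sum_add_distrib]
    congr 1
    · rw [Finset.card_filter]
    · rw [← Finset.sum_filter (fun j : ↥ψ.internals => (j : RBT α) = ψ)
        (fun _ => n - m), Finset.sum_const, smul_eq_mul]
  have hancv : (Finset.univ.filter (fun j : ↥ψ.internals => Anc v (j : RBT α))).card
      = m - 1 := by
    rw [card_coe_filter ψ.internals (fun j => Anc v j), filter_anc hvsub, hvcard]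
  have hrootcard :
      (Finset.univ.filter (fun j : ↥ψ.internals => (j : RBT α) = ψ)).card = 1 := by
    rw [card_coe_filter ψ.internals (fun j => j = ψ), Finset.filter_eq', if_pos hroot]
    simp
  have hywitness : y ∈ popHistories ψ n := by
    constructor
    · rw [hsum Finset.univ, hancv, hrootcard]
      omega
    · intro i
      by_cases hiψ : (↑i : RBT α) = ψ
      · have hfull : (Finset.univ.filter
            fun j : ↥ψ.internals => Anc (↑i : RBT α) (↑j : RBT α)) = Finset.univ := by
          apply Finset.filter_true_of_mem
          intro j _
          rw [hiψ]
          exact internals_subset_subtrees _ j.2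
        rw [hfull, hsum Finset.univ, hancv, hrootcard, hiψ, hψ.2, hn]
        omega
      · rw [hsum _]
        have hB : ((Finset.univ.filter
            (fun j : ↥ψ.internals => Anc (↑i : RBT α) (↑j : RBT α))).filter
            (fun j : ↥ψ.internals => (j : RBT α) = ψ)).card = 0 := by
          rw [Finset.card_eq_zero, Finset.filter_eq_empty_iff]
          intro j hj
          rw [Finset.mem_filter] at hj
          intro hjψ
          apply hiψ
          rw [hjψ] at hj
          exact mem_subtrees_antisymm (internals_subset_subtrees _ i.2) hj.2
        rw [hB]
        have hA : ((Finset.univ.filter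
            (fun j : ↥ψ.internals => Anc (↑i : RBT α) (↑j : RBT α))).filter
            (fun j : ↥ψ.internals => Anc v (j : RBT α))).card
            ≤ (↑i : RBT α).clade.card - 1 := by
          calc ((Finset.univ.filter
              (fun j : ↥ψ.internals => Anc (↑i : RBT α) (↑j : RBT α))).filter
              (fun j : ↥ψ.internals => Anc v (j : RBT α))).card
              ≤ (Finset.univ.filter
                (fun j : ↥ψ.internals => Anc (↑i : RBT α) (↑j : RBT α))).card :=
                Finset.card_le_card (Finset.filter_subset _ _)
            _ = (↑i : RBT α).internals.card := by
                rw [card_coe_filter ψ.internals (fun j => Anc (↑i : RBT α) j),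
                  filter_anc (internals_subset_subtrees _ i.2)]
            _ ≤ (↑i : RBT α).clade.card - 1 := by
                have h1 := card_internals_add_one
                  (nodup_of_mem_subtrees hψ.1 (internals_subset_subtrees _ i.2))
                have h2' := card_clade
                  (nodup_of_mem_subtrees hψ.1 (internals_subset_subtrees _ i.2))
                omega
        omega
  refine ⟨y, hywitness, ?_⟩
  rintro ⟨h, hh, hPhi⟩
  set iv : ↥ψ.internals := ⟨v, hvint⟩ with hiv
  have hle := sum_phi_le h hh iv
  have hcount : (T.internals.filter fun s => s.clade ⊆ (↑iv : RBT α).clade).card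
      ≤ m - 2 := by
    apply count_le_of_not_clade hT.1
    · rw [hT.2, ← hψ.2]
      exact clade_subset_of_mem_subtrees hvsub
    · exact clade_nonempty v
    · exact hvnc
  have hyval : ∑ j ∈ Finset.univ.filter
      (fun j : ↥ψ.internals => Anc (↑iv : RBT α) (↑j : RBT α)), y j = m - 1 := by
    rw [hsum _]
    have hAA : ((Finset.univ.filter
        (fun j : ↥ψ.internals => Anc (↑iv : RBT α) (↑j : RBT α))).filter
        (fun j : ↥ψ.internals => Anc v (j : RBT α))).card = m - 1 := by
      rw [Finset.filter_filter]
      have heqf : (Finset.univ.filter fun j : ↥ψ.internals =>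
          Anc (↑iv : RBT α) (↑j : RBT α) ∧ Anc v (↑j : RBT α))
          = Finset.univ.filter fun j : ↥ψ.internals => Anc v (↑j : RBT α) := by
        apply Finset.filter_congr
        intro j _
        simp only [hiv]
        tauto
      rw [heqf, hancv]
    have hBB : ((Finset.univ.filter
        (fun j : ↥ψ.internals => Anc (↑iv : RBT α) (↑j : RBT α))).filter
        (fun j : ↥ψ.internals => (j : RBT α) = ψ)).card = 0 := by
      rw [Finset.card_eq_zero, Finset.filter_eq_empty_iff]
      intro j hj
      rw [Finset.mem_filter] at hj
      intro hjψ
      apply hvne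
      rw [hjψ] at hj
      exact mem_subtrees_antisymm hvsub hj.2
    rw [hAA, hBB]
    omega
  rw [← hPhi] at hyval
  rw [hyval] at hle
  have := hle.trans hcount
  omega

end RBT

/-- If `T` does not have the same set of clades as `ψ`, then
the set of population histories compatible with `T` is a proper subset of
`Y_ψ`, while every population history is compatible with the matching gene
tree `T_M = ψ`; in particular strictly fewer population histories are
compatible with `T` than with `T_M`. -/
theorem nonmatching_compatible_popHistories_proper
    {α : Type} [DecidableEq α] (X : Finset α) (n : ℕ)
    (hn : X.card = n) (h2 : 2 ≤ n)
    (ψ T : RBT α) (hψ : ψ.IsTreeOn X) (hT : T.IsTreeOn X)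
    (hne : T.cladeSet ≠ ψ.cladeSet) :
    RBT.Phi ψ T '' RBT.coalHistories ψ T ⊂ RBT.popHistories ψ n ∧
    RBT.Phi ψ ψ '' RBT.coalHistories ψ ψ = RBT.popHistories ψ n ∧
    (RBT.Phi ψ T '' RBT.coalHistories ψ T).ncard <
      (RBT.Phi ψ ψ '' RBT.coalHistories ψ ψ).ncard := by
  classical
  have hA : RBT.Phi ψ T '' RBT.coalHistories ψ T ⊆ RBT.popHistories ψ n := by
    rintro _ ⟨h, hh, rfl⟩
    exact RBT.phi_mem_popHistories hn hψ hT hh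
  have hB : RBT.Phi ψ ψ '' RBT.coalHistories ψ ψ = RBT.popHistories ψ n := by
    apply Set.Subset.antisymm
    · rintro _ ⟨h, hh, rfl⟩
      exact RBT.phi_mem_popHistories hn hψ hψ hh
    · exact RBT.popHistories_subset_phi hn hψ
  obtain ⟨y, hy1, hy2⟩ := RBT.exists_witness hn h2 hψ hT hne
  have hss : RBT.Phi ψ T '' RBT.coalHistories ψ T ⊂ RBT.popHistories ψ n :=
    (Set.ssubset_iff_of_subset hA).mpr ⟨y, hy1, hy2⟩
  refine ⟨hss, hB, ?_⟩
  have hfin : (RBT.Phi ψ ψ '' RBT.coalHistories ψ ψ).Finite :=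
    Set.Finite.image _ (Set.toFinite _)
  exact Set.ncard_lt_ncard (hB ▸ hss) hfin
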